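/- Elliptical potential lemma: for any λ > 0 and any sequence x_1, …, x_T ∈ ℝ^d with ‖x_t‖₂ ≤ L for all t ∈ [T], defining Z_t = λI + ∑_{i=1}^t x_i x_iᵀ, it holds that ∑_{t=1}^T min{1, ‖x_t‖²_{Z_{t-1}^{-1}}} ≤ 2d·log((dλ + TL²)/(dλ)). -/

import Mathlib

/-! By the matrix determinant lemma each rank-one update multiplies the determinant,
`det Z_t = det Z_{t-1} * (1 + ‖x_t‖²_{Z_{t-1}⁻¹})`, so `det Z_T = λ^d ∏_t (1 + ‖x_t‖²_{Z_{t-1}⁻¹})`.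
As `min 1 u ≤ 2 log (1 + u)` for `u ≥ 0`, the sum is at most `2 log (det Z_T / λ^d)`, and AM-GM
on the eigenvalues gives `det Z_T ≤ (tr Z_T / d)^d ≤ ((dλ + T L²) / d)^d`. -/

open Matrix Finset

/-- The regularized Gram matrix `Z_t = λ I + ∑_{i=1}^t x_i x_iᵀ`. -/
noncomputable def gramZ {d : ℕ} (lam : ℝ) (x : ℕ → Fin d → ℝ) (t : ℕ) :
    Matrix (Fin d) (Fin d) ℝ :=
  lam • (1 : Matrix (Fin d) (Fin d) ℝ) + ∑ i ∈ Finset.Icc 1 t, vecMulVec (x i) (x i)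

lemma min_one_le_two_mul_log_one_add {u : ℝ} (hu : 0 ≤ u) :
    min 1 u ≤ 2 * Real.log (1 + u) := by
  have h1u : 0 < 1 + u := by linarith
  calc min 1 u ≤ 2 * u / (1 + u) := by
        rw [le_div_iff₀ h1u]
        rcases le_total u 1 with h | h
        · rw [min_eq_right h]; nlinarith
        · rw [min_eq_left h]; nlinarith
    _ = 2 * (1 - (1 + u)⁻¹) := by field_simp; ring
    _ ≤ 2 * Real.log (1 + u) := by gcongr; exact Real.one_sub_inv_le_log_of_pos h1u

theorem Real.prod_le_sum_div_card_pow {ι : Type*} [Fintype ι] (z : ι → ℝ) (hz : ∀ i, 0 ≤ z i) :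
    ∏ i, z i ≤ ((∑ i, z i) / Fintype.card ι) ^ Fintype.card ι := by
  rcases isEmpty_or_nonempty ι with _ | _
  · simp
  have hcard : (0 : ℝ) < Fintype.card ι := by exact_mod_cast Fintype.card_pos
  have hprod : 0 ≤ ∏ i, z i := prod_nonneg fun i _ ↦ hz i
  have hamgm := Real.geom_mean_le_arith_mean univ (fun _ ↦ 1) z (fun _ _ ↦ zero_le_one)
    (by simpa using hcard) (fun i _ ↦ hz i)
  simp only [Real.rpow_one, sum_const, card_univ, nsmul_eq_mul, mul_one, one_mul] at hamgm
  calc ∏ i, z i = ((∏ i, z i) ^ (Fintype.card ι : ℝ)⁻¹) ^ Fintype.card ι := by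
        rw [← Real.rpow_natCast, ← Real.rpow_mul hprod, inv_mul_cancel₀ hcard.ne', Real.rpow_one]
    _ ≤ _ := by gcongr

theorem Matrix.PosSemidef.det_le_trace_div_card_pow {n : Type*} [Fintype n] [DecidableEq n]
    {A : Matrix n n ℝ} (hA : A.PosSemidef) :
    A.det ≤ (A.trace / Fintype.card n) ^ Fintype.card n := by
  rw [hA.1.det_eq_prod_eigenvalues, hA.1.trace_eq_sum_eigenvalues]
  simpa using Real.prod_le_sum_div_card_pow _ hA.eigenvalues_nonneg

theorem Matrix.det_add_vecMulVec {n : Type*} [Fintype n] [DecidableEq n] {R : Type*} [CommRing R]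
    {A : Matrix n n R} (hA : IsUnit A.det) (u v : n → R) :
    (A + vecMulVec u v).det = A.det * (1 + v ⬝ᵥ A⁻¹ *ᵥ u) := by
  rw [vecMulVec_eq Unit, det_add_replicateCol_mul_replicateRow hA, Matrix.mul_assoc,
    ← replicateCol_mulVec]
  simp [det_unique, replicateRow_mul_replicateCol_apply]

section gramZ

variable {d : ℕ} {lam : ℝ} (x : ℕ → Fin d → ℝ)

lemma gramZ_zero : gramZ lam x 0 = lam • 1 := by
  simp [gramZ]

lemma gramZ_succ (t : ℕ) :
    gramZ lam x (t + 1) = gramZ lam x t + vecMulVec (x (t + 1)) (x (t + 1)) := by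
  rw [gramZ, gramZ, sum_Icc_succ_top (Nat.le_add_left 1 t), add_assoc]

lemma posDef_gramZ (hlam : 0 < lam) (t : ℕ) : (gramZ lam x t).PosDef :=
  (PosDef.smul PosDef.one hlam).add_posSemidef <|
    posSemidef_sum _ fun i _ ↦ by simpa using posSemidef_vecMulVec_self_star (x i)

lemma trace_gramZ (t : ℕ) :
    (gramZ lam x t).trace = d * lam + ∑ i ∈ Icc 1 t, x i ⬝ᵥ x i := by
  simp [gramZ, trace_sum, mul_comm]

lemma det_gramZ (hlam : 0 < lam) (T : ℕ) :
    (gramZ lam x T).det =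
      lam ^ d * ∏ t ∈ Icc 1 T, (1 + x t ⬝ᵥ (gramZ lam x (t - 1))⁻¹ *ᵥ x t) := by
  induction T with
  | zero => simp [gramZ_zero]
  | succ T ih =>
    rw [prod_Icc_succ_top (Nat.le_add_left 1 T), ← mul_assoc, ← ih, gramZ_succ,
      det_add_vecMulVec (posDef_gramZ x hlam T).det_pos.ne'.isUnit, Nat.add_sub_cancel]

end gramZ

/-- Elliptical potential lemma. -/
theorem statement15 {d : ℕ} (lam : ℝ) (hlam : 0 < lam) (T : ℕ) (L : ℝ)
    (x : ℕ → Fin d → ℝ) (hx : ∀ t ∈ Finset.Icc 1 T, Real.sqrt (x t ⬝ᵥ x t) ≤ L) :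
    ∑ t ∈ Finset.Icc 1 T, min 1 (x t ⬝ᵥ ((gramZ lam x (t - 1))⁻¹ *ᵥ x t)) ≤
      2 * (d : ℝ) * Real.log (((d : ℝ) * lam + (T : ℝ) * L ^ 2) / ((d : ℝ) * lam)) := by
  set u : ℕ → ℝ := fun t ↦ x t ⬝ᵥ ((gramZ lam x (t - 1))⁻¹ *ᵥ x t)
  have hu (t : ℕ) : 0 ≤ u t := by
    simpa using (posDef_gramZ x hlam (t - 1)).inv.posSemidef.dotProduct_mulVec_nonneg (x t)
  have htrace : (gramZ lam x T).trace ≤ d * lam + T * L ^ 2 := by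
    rw [trace_gramZ]
    gcongr
    simpa using sum_le_card_nsmul (Icc 1 T) (fun t ↦ x t ⬝ᵥ x t) (L ^ 2)
      fun t ht ↦ (Real.sqrt_le_iff.1 (hx t ht)).2
  have hprod : ∏ t ∈ Icc 1 T, (1 + u t) ≤ ((d * lam + T * L ^ 2) / (d * lam)) ^ d := by
    have hdet := (posDef_gramZ x hlam T).posSemidef.det_le_trace_div_card_pow
    rw [det_gramZ x hlam, Fintype.card_fin] at hdet
    have htrace_nonneg := (posDef_gramZ x hlam T).posSemidef.trace_nonneg
    rw [← div_div, div_pow, le_div_iff₀ (by positivity), mul_comm]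
    exact hdet.trans (by gcongr)
  calc ∑ t ∈ Icc 1 T, min 1 (u t) ≤ ∑ t ∈ Icc 1 T, 2 * Real.log (1 + u t) :=
        sum_le_sum fun t _ ↦ min_one_le_two_mul_log_one_add (hu t)
    _ = 2 * Real.log (∏ t ∈ Icc 1 T, (1 + u t)) := by
        rw [Real.log_prod fun t _ ↦ by linarith [hu t], mul_sum]
    _ ≤ 2 * Real.log (((d * lam + T * L ^ 2) / (d * lam)) ^ d) := by
        gcongr
        exact prod_pos fun t _ ↦ by linarith [hu t]
    _ = _ := by rw [Real.log_pow]; ring
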